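/- Let φ : M₃ → M₃ be a linear preserver of the Lorentz spectrum. Then the subspace S₁ = { [0 0; vᵀ a] : v ∈ ℝ², a ∈ ℝ } of M₃ is φ-invariant, i.e., φ(S₁) ⊆ S₁. -/

import Mathlib

open Matrix

noncomputable section

/-- Euclidean norm of a vector in `ℝ^n`. -/
def enorm {n : ℕ} (x : Fin n → ℝ) : ℝ := Real.sqrt (∑ i, x i ^ 2)

/-- The Lorentz cone in `ℝ^(n+1)`: vectors `(ξ, η)` with `‖ξ‖ ≤ η`. -/
def lorentzCone (n : ℕ) : Set (Fin (n + 1) → ℝ) :=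
  {x | _root_.enorm (fun i : Fin n => x i.castSucc) ≤ x (Fin.last n)}

/-- `x` is a Lorentz eigenvector of `A` associated with the Lorentz eigenvalue `l`. -/
def IsLEigenvector {n : ℕ} (A : Matrix (Fin (n + 1)) (Fin (n + 1)) ℝ) (l : ℝ)
    (x : Fin (n + 1) → ℝ) : Prop :=
  x ≠ 0 ∧ x ∈ lorentzCone n ∧ (A - l • 1) *ᵥ x ∈ lorentzCone n ∧
    x ⬝ᵥ ((A - l • 1) *ᵥ x) = 0

/-- The Lorentz spectrum of `A`. -/
def sigmaL {n : ℕ} (A : Matrix (Fin (n + 1)) (Fin (n + 1)) ℝ) : Set ℝ :=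
  {l | ∃ x, IsLEigenvector A l x}

/-- The interior Lorentz spectrum of `A`. -/
def sigmaInt {n : ℕ} (A : Matrix (Fin (n + 1)) (Fin (n + 1)) ℝ) : Set ℝ :=
  {l | ∃ x, IsLEigenvector A l x ∧
    _root_.enorm (fun i : Fin n => x i.castSucc) < x (Fin.last n)}

/-- The boundary Lorentz spectrum of `A`. -/
def sigmaBd {n : ℕ} (A : Matrix (Fin (n + 1)) (Fin (n + 1)) ℝ) : Set ℝ :=
  {l | ∃ x, IsLEigenvector A l x ∧
    _root_.enorm (fun i : Fin n => x i.castSucc) = x (Fin.last n)}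

/-- The block matrix `[X u; vᵀ a]` in `M₃`. -/
def blk (X : Matrix (Fin 2) (Fin 2) ℝ) (u v : Fin 2 → ℝ) (a : ℝ) :
    Matrix (Fin 3) (Fin 3) ℝ :=
  Matrix.of (Fin.snoc (fun i : Fin 2 => Fin.snoc (X i) (u i)) (Fin.snoc v a))

lemma mem_cone_iff (x : Fin 3 → ℝ) : x ∈ lorentzCone 2 ↔ Real.sqrt ((x 0)^2 + (x 1)^2) ≤ x 2 := by
  simp only [lorentzCone, _root_.enorm, Set.mem_setOf_eq, Fin.sum_univ_two]
  rfl

lemma dot3 (x y : Fin 3 → ℝ) : x ⬝ᵥ y = x 0 * y 0 + x 1 * y 1 + x 2 * y 2 := by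
  simp [dotProduct, Fin.sum_univ_three]

lemma mulVec3 (M : Matrix (Fin 3) (Fin 3) ℝ) (x : Fin 3 → ℝ) (i : Fin 3) :
    (M *ᵥ x) i = M i 0 * x 0 + M i 1 * x 1 + M i 2 * x 2 := by
  simp [mulVec, dotProduct, Fin.sum_univ_three]

lemma subSmul_apply (M : Matrix (Fin 3) (Fin 3) ℝ) (l : ℝ) (i j : Fin 3) :
    (M - l • 1) i j = M i j - l * (if i = j then 1 else 0) := by
  simp [Matrix.sub_apply, Matrix.smul_apply, Matrix.one_apply]

lemma vec3_ne_zero (x : Fin 3 → ℝ) (h0 : x 0 = 0) (h1 : x 1 = 0) (h2 : x 2 = 0) : x = 0 := by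
  funext i; fin_cases i <;> simpa
@[simp] lemma blk_apply_00 (X u v a) : blk X u v a 0 0 = X 0 0 := rfl
@[simp] lemma blk_apply_01 (X u v a) : blk X u v a 0 1 = X 0 1 := rfl
@[simp] lemma blk_apply_02 (X u v a) : blk X u v a 0 2 = u 0 := rfl
@[simp] lemma blk_apply_10 (X u v a) : blk X u v a 1 0 = X 1 0 := rfl
@[simp] lemma blk_apply_11 (X u v a) : blk X u v a 1 1 = X 1 1 := rfl
@[simp] lemma blk_apply_12 (X u v a) : blk X u v a 1 2 = u 1 := rfl
@[simp] lemma blk_apply_20 (X u v a) : blk X u v a 2 0 = v 0 := rfl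
@[simp] lemma blk_apply_21 (X u v a) : blk X u v a 2 1 = v 1 := rfl
@[simp] lemma blk_apply_22 (X u v a) : blk X u v a 2 2 = a := rfl

lemma memA (v : Fin 2 → ℝ) (a l : ℝ) (hl : 0 ≤ l) (hr : 0 < (v 0)^2 + (v 1)^2)
    (hb : (2*l - a)^2 ≤ (v 0)^2 + (v 1)^2) : l ∈ sigmaL (blk 0 0 v a) := by
  set r2 := (v 0)^2 + (v 1)^2 with hr2
  set s : ℝ := 2*l - a with hs
  set d := Real.sqrt (r2 - s^2) with hdd
  have hd2 : d^2 = r2 - s^2 := Real.sq_sqrt (by linarith)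
  set ξ0 := (s * v 0 - d * v 1)/r2 with hx0
  set ξ1 := (s * v 1 + d * v 0)/r2 with hx1
  have hr2ne : r2 ≠ 0 := ne_of_gt hr
  have hunit : ξ0^2 + ξ1^2 = 1 := by
    rw [hx0, hx1]; field_simp; linear_combination (r2) * hd2
  have hvs : v 0 * ξ0 + v 1 * ξ1 = s := by
    rw [hx0, hx1]; field_simp; ring
  set x : Fin 3 → ℝ := ![ξ0, ξ1, 1] with hxdef
  have hx0' : x 0 = ξ0 := rfl
  have hx1' : x 1 = ξ1 := rfl
  have hx2' : x 2 = 1 := rfl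
  set M := blk 0 0 v a - l • (1 : Matrix (Fin 3) (Fin 3) ℝ) with hM
  have hy0 : (M *ᵥ x) 0 = -l * ξ0 := by
    rw [hM, mulVec3]
    simp [subSmul_apply, hx0', hx1', hx2']
  have hy1 : (M *ᵥ x) 1 = -l * ξ1 := by
    rw [hM, mulVec3]
    simp [subSmul_apply, hx0', hx1', hx2']
  have hy2 : (M *ᵥ x) 2 = l := by
    rw [hM, mulVec3]
    simp [subSmul_apply, hx0', hx1', hx2']
    linarith [hvs]
  refine ⟨x, ?_, ?_, ?_, ?_⟩
  · intro h
    have := congrFun h 2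
    rw [hx2'] at this
    norm_num at this
  · rw [mem_cone_iff, hx0', hx1', hx2', hunit, Real.sqrt_one]
  · rw [mem_cone_iff, hy0, hy1, hy2]
    have : (-l*ξ0)^2 + (-l*ξ1)^2 = l^2 := by linear_combination (l^2) * hunit
    rw [this, Real.sqrt_sq hl]
  · rw [dot3, hy0, hy1, hy2, hx0', hx1', hx2']
    nlinarith [hunit]
set_option maxHeartbeats 1600000 in
lemma classify (B : Matrix (Fin 3) (Fin 3) ℝ) (l : ℝ) (h : l ∈ sigmaL B) :
    det (B - l • (1:Matrix (Fin 3) (Fin 3) ℝ)) = 0 ∨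
    ∃ p q : ℝ, p^2 + q^2 = 1 ∧
      (B 0 0 * p + B 0 1 * q + B 0 2) * q - (B 1 0 * p + B 1 1 * q + B 1 2) * p = 0 ∧
      2 * l = (p * (B 0 0 * p + B 0 1 * q + B 0 2) + q * (B 1 0 * p + B 1 1 * q + B 1 2))
        + (B 2 0 * p + B 2 1 * q + B 2 2) ∧
      p * (B 0 0 * p + B 0 1 * q + B 0 2) + q * (B 1 0 * p + B 1 1 * q + B 1 2) ≤ l := by
  obtain ⟨x, hx, hcone, hycone, hdot⟩ := h
  set M := B - l • (1:Matrix (Fin 3) (Fin 3) ℝ) with hM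
  set y := M *ᵥ x with hy
  have e0 : B 0 0 * x 0 + B 0 1 * x 1 + B 0 2 * x 2 - l * x 0 = y 0 := by
    rw [hy, hM, mulVec3]; simp [subSmul_apply]; ring
  have e1 : B 1 0 * x 0 + B 1 1 * x 1 + B 1 2 * x 2 - l * x 1 = y 1 := by
    rw [hy, hM, mulVec3]; simp [subSmul_apply]; ring
  have e2 : B 2 0 * x 0 + B 2 1 * x 1 + B 2 2 * x 2 - l * x 2 = y 2 := by
    rw [hy, hM, mulVec3]; simp [subSmul_apply]; ring
  rw [mem_cone_iff] at hcone hycone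
  rw [dot3] at hdot
  have hMdet : (∃ v, v ≠ 0 ∧ M *ᵥ v = 0) → det M = 0 := by
    intro ⟨v, hv, hMv⟩
    exact Matrix.exists_mulVec_eq_zero_iff.mp ⟨v, hv, hMv⟩
  clear_value y
  set n := Real.sqrt ((x 0)^2 + (x 1)^2) with hn
  set m := Real.sqrt ((y 0)^2 + (y 1)^2) with hm
  have hn0 : 0 ≤ n := Real.sqrt_nonneg _
  have hm0 : 0 ≤ m := Real.sqrt_nonneg _
  have hn2 : n^2 = (x 0)^2 + (x 1)^2 := Real.sq_sqrt (by positivity)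
  have hm2 : m^2 = (y 0)^2 + (y 1)^2 := Real.sq_sqrt (by positivity)
  clear_value n m
  clear hn hm
  have hx2pos : 0 < x 2 := by
    rcases lt_or_ge 0 (x 2) with h' | h'
    · exact h'
    · exfalso
      have hn0' : n = 0 := le_antisymm (by linarith) hn0
      have h00 : (x 0)^2 + (x 1)^2 = 0 := by rw [← hn2, hn0']; ring
      have hx0 : x 0 = 0 := by nlinarith [sq_nonneg (x 0), sq_nonneg (x 1)]
      have hx1 : x 1 = 0 := by nlinarith [sq_nonneg (x 0), sq_nonneg (x 1)]
      have hx2 : x 2 = 0 := by linarith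
      exact hx (vec3_ne_zero x hx0 hx1 hx2)
  have hcs : (x 0 * y 0 + x 1 * y 1)^2 + (x 0 * y 1 - x 1 * y 0)^2 = n^2 * m^2 := by
    rw [hn2, hm2]; ring
  have hcs' : -(n*m) ≤ x 0 * y 0 + x 1 * y 1 := by
    nlinarith [sq_nonneg (x 0 * y 0 + x 1 * y 1 + n*m), sq_nonneg (x 0 * y 1 - x 1 * y 0),
      mul_nonneg hn0 hm0]
  rcases lt_or_eq_of_le hcone with hlt | heq
  · -- interior: y = 0
    left
    have hx2m : x 2 * m ≤ x 2 * y 2 := mul_le_mul_of_nonneg_left hycone hx2pos.le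
    have hm00 : m = 0 := by nlinarith
    have hy00 : y 0 = 0 := by nlinarith [sq_nonneg (y 0), sq_nonneg (y 1)]
    have hy01 : y 1 = 0 := by nlinarith [sq_nonneg (y 0), sq_nonneg (y 1)]
    have hy02 : y 2 = 0 := by nlinarith
    exact hMdet ⟨x, hx, by rw [← hy]; exact vec3_ne_zero y hy00 hy01 hy02⟩
  · -- boundary
    right
    subst heq
    have hnpos : 0 < x 2 := hx2pos
    have hnne : x 2 ≠ 0 := ne_of_gt hnpos
    have hny : x 2 * m ≤ x 2 * y 2 := mul_le_mul_of_nonneg_left hycone hnpos.le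
    have hy2m : y 2 = m := by
      have h1 : x 2 * y 2 ≤ x 2 * m := by linarith
      exact mul_left_cancel₀ hnne (le_antisymm h1 hny)
    have heqcs : x 0 * y 0 + x 1 * y 1 = -(x 2 * m) := by
      rw [hy2m] at hdot; linarith
    have hcross : x 0 * y 1 - x 1 * y 0 = 0 := by
      have h2 : (x 0 * y 1 - x 1 * y 0)^2 = 0 := by
        linear_combination hcs + (x 2 * m - (x 0 * y 0 + x 1 * y 1)) * heqcs
      exact sq_eq_zero_iff.mp h2
    have hy0' : (x 2)^2 * y 0 = -(m * x 2 * x 0) := by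
      linear_combination x 0 * heqcs - x 1 * hcross + y 0 * hn2
    have hy1' : (x 2)^2 * y 1 = -(m * x 2 * x 1) := by
      linear_combination x 1 * heqcs + x 0 * hcross + y 1 * hn2
    obtain ⟨p, hp⟩ : ∃ p : ℝ, p = x 0 / x 2 := ⟨_, rfl⟩
    obtain ⟨q, hq⟩ : ∃ q : ℝ, q = x 1 / x 2 := ⟨_, rfl⟩
    obtain ⟨μ, hmu⟩ : ∃ μ : ℝ, μ = m / x 2 := ⟨_, rfl⟩
    have hmu0 : 0 ≤ μ := hmu ▸ div_nonneg hm0 hnpos.le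
    have ey0 : y 0 = -(μ * x 0) := by
      have h5 : (x 2)^2 * (-(μ * x 0)) = -(m * x 2 * x 0) := by rw [hmu]; field_simp
      exact mul_left_cancel₀ (pow_ne_zero 2 hnne) (hy0'.trans h5.symm)
    have ey1 : y 1 = -(μ * x 1) := by
      have h5 : (x 2)^2 * (-(μ * x 1)) = -(m * x 2 * x 1) := by rw [hmu]; field_simp
      exact mul_left_cancel₀ (pow_ne_zero 2 hnne) (hy1'.trans h5.symm)
    have sa0 : B 0 0 * x 0 + B 0 1 * x 1 + B 0 2 * x 2 = (l - μ) * x 0 := by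
      linear_combination e0 + ey0
    have sa1 : B 1 0 * x 0 + B 1 1 * x 1 + B 1 2 * x 2 = (l - μ) * x 1 := by
      linear_combination e1 + ey1
    have hpx : p * x 2 = x 0 := by rw [hp]; field_simp
    have hqx : q * x 2 = x 1 := by rw [hq]; field_simp
    have hmux : μ * x 2 = m := by rw [hmu]; field_simp
    have sa2 : B 2 0 * x 0 + B 2 1 * x 1 + B 2 2 * x 2 = (l + μ) * x 2 := by
      linear_combination e2 + hy2m - hmux
    have hunit : p^2 + q^2 = 1 := by
      have h7 : (p^2 + q^2) * (x 2)^2 = 1 * (x 2)^2 := by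
        linear_combination -hn2 + (p*x 2 + x 0)*hpx + (q*x 2 + x 1)*hqx
      exact mul_right_cancel₀ (pow_ne_zero 2 hnne) h7
    have a0 : B 0 0 * p + B 0 1 * q + B 0 2 = (l - μ) * p := by
      have h6 : (B 0 0 * p + B 0 1 * q + B 0 2) * x 2 = ((l - μ) * p) * x 2 := by
        linear_combination sa0 + (B 0 0 - l + μ)*hpx + B 0 1 * hqx
      exact mul_right_cancel₀ hnne h6
    have a1 : B 1 0 * p + B 1 1 * q + B 1 2 = (l - μ) * q := by
      have h6 : (B 1 0 * p + B 1 1 * q + B 1 2) * x 2 = ((l - μ) * q) * x 2 := by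
        linear_combination sa1 + (B 1 1 - l + μ)*hqx + B 1 0 * hpx
      exact mul_right_cancel₀ hnne h6
    have a2 : B 2 0 * p + B 2 1 * q + B 2 2 = l + μ := by
      have h6 : (B 2 0 * p + B 2 1 * q + B 2 2) * x 2 = (l + μ) * x 2 := by
        linear_combination sa2 + B 2 0 * hpx + B 2 1 * hqx
      exact mul_right_cancel₀ hnne h6
    refine ⟨p, q, hunit, ?_, ?_, ?_⟩
    · rw [a0, a1]; ring
    · rw [a0, a1, a2]; linear_combination (μ - l) * hunit
    · rw [a0, a1]
      have h3 : p * ((l-μ)*p) + q * ((l-μ)*q) = l - μ := by linear_combination (l-μ) * hunit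
      rw [h3]; linarith
lemma vdm {N : ℕ} (t c : Fin N → ℝ) (hinj : Function.Injective t)
    (h : ∀ i, ∑ j, c j * t i ^ (j : ℕ) = 0) : ∀ j, c j = 0 := by
  have hM : (Matrix.vandermonde t) *ᵥ c = 0 := by
    funext i
    simpa [Matrix.mulVec, dotProduct, Matrix.vandermonde, mul_comm] using h i
  have hd : det (Matrix.vandermonde t) ≠ 0 := by
    rw [Matrix.det_vandermonde]
    apply Finset.prod_ne_zero_iff.mpr
    intro i _
    apply Finset.prod_ne_zero_iff.mpr
    intro j hj
    have : j ≠ i := ne_of_gt (Finset.mem_Ioi.mp hj)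
    exact sub_ne_zero.mpr (fun hc => this (hinj hc))
  have := Matrix.eq_zero_of_mulVec_eq_zero hd hM
  exact fun j => congrFun this j

lemma det_sub_expand (B : Matrix (Fin 3) (Fin 3) ℝ) (l : ℝ) :
    det (B - l • (1:Matrix (Fin 3) (Fin 3) ℝ)) =
      det B
      - (B 0 0 * B 1 1 - B 0 1 * B 1 0 + B 0 0 * B 2 2 - B 0 2 * B 2 0
         + B 1 1 * B 2 2 - B 1 2 * B 2 1) * l
      + (B 0 0 + B 1 1 + B 2 2) * l^2 - l^3 := by
  rw [Matrix.det_fin_three, Matrix.det_fin_three]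
  simp [subSmul_apply]
  ring
lemma circle_param (p q t : ℝ) (hu : p^2 + q^2 = 1) (hp : p ≠ -1) (ht : t = q/(1+p)) :
    p * (1+t^2) = 1 - t^2 ∧ q * (1+t^2) = 2*t := by
  have hple : -1 ≤ p := by nlinarith [sq_nonneg q]
  have hp1 : 0 < 1 + p := by
    rcases lt_or_eq_of_le hple with h | h
    · linarith
    · exact absurd h.symm hp
  have hpne : 1 + p ≠ 0 := ne_of_gt hp1
  have hq : q = t*(1+p) := by rw [ht]; field_simp
  have h2 : (1+p) * (p*(1+t^2) - (1-t^2)) = 0 := by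
    linear_combination hu - (t*(1+p)+q) * hq
  have h3 : p*(1+t^2) = 1 - t^2 := by
    rcases mul_eq_zero.mp h2 with h | h
    · exact absurd h hpne
    · linarith
  exact ⟨h3, by linear_combination (1+t^2)*hq + t*h3⟩

set_option maxHeartbeats 4000000 in
lemma step1 (B : Matrix (Fin 3) (Fin 3) ℝ) (v : Fin 2 → ℝ) (a : ℝ)
    (hav : a^2 < (v 0)^2 + (v 1)^2)
    (hsig : sigmaL B = sigmaL (blk 0 0 v a)) :
    B 0 2 = 0 ∧ B 1 2 = 0 ∧ B 0 1 = 0 ∧ B 1 0 = 0 ∧ B 0 0 = B 1 1 := by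
  classical
  have hr2 : 0 < (v 0)^2 + (v 1)^2 := lt_of_le_of_lt (sq_nonneg a) hav
  obtain ⟨r, hrdef⟩ : ∃ r : ℝ, r = Real.sqrt ((v 0)^2 + (v 1)^2) := ⟨_, rfl⟩
  have hr0 : 0 ≤ r := hrdef ▸ Real.sqrt_nonneg _
  have hrsq : r^2 = (v 0)^2 + (v 1)^2 := by rw [hrdef]; exact Real.sq_sqrt hr2.le
  have har : |a| < r := by
    rw [hrdef, ← Real.sqrt_sq_eq_abs]
    exact Real.sqrt_lt_sqrt (sq_nonneg a) hav
  have hEa : -a < r := by rcases abs_lt.mp har with ⟨h1, h2⟩; linarith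
  have hEa' : a < r := (abs_lt.mp har).2
  obtain ⟨E, hEdef⟩ : ∃ E : ℝ, E = (a + r)/2 := ⟨_, rfl⟩
  have hE : 0 < E := by rw [hEdef]; linarith
  -- candidate lambdas
  obtain ⟨lam, hlam⟩ : ∃ lam : ℕ → ℝ, lam = fun k : ℕ => ((k:ℝ)+1)*E/10 :=
    ⟨fun k : ℕ => ((k:ℝ)+1)*E/10, rfl⟩
  have hlaminj : Function.Injective lam := by
    intro k1 k2 h
    rw [hlam] at h
    simp only at h
    have : (k1:ℝ) = k2 := by
      field_simp at h
      linarith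
    exact_mod_cast this
  have hmem : ∀ k, k < 9 → lam k ∈ sigmaL B := by
    intro k hk
    rw [hsig]
    have hk9 : (k:ℝ) + 1 ≤ 9 := by
      have : (k:ℝ) ≤ 8 := by exact_mod_cast Nat.lt_succ_iff.mp hk
      linarith
    have hkpos : (0:ℝ) < (k:ℝ) + 1 := by positivity
    have hlampos : 0 < lam k := by rw [hlam]; positivity
    have hlamle : 2 * lam k - a ≤ r := by
      rw [hlam]
      simp only
      nlinarith [hE, hk9]
    have hlamge : -r ≤ 2 * lam k - a := by
      rw [hlam]; simp only; nlinarith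
    apply memA v a _ hlampos.le hr2
    calc (2 * lam k - a)^2 ≤ r^2 := sq_le_sq' hlamge hlamle
    _ = _ := hrsq
  set cand : Finset ℝ := (Finset.range 9).image lam with hcand
  have hcandcard : cand.card = 9 := by
    rw [hcand, Finset.card_image_of_injective _ hlaminj, Finset.card_range]
  have hcandmem : ∀ s ∈ cand, s ∈ sigmaL B := by
    intro s hs
    rw [hcand, Finset.mem_image] at hs
    obtain ⟨k, hk, rfl⟩ := hs
    exact hmem k (Finset.mem_range.mp hk)
  set bad := cand.filter (fun s => det (B - s • (1:Matrix (Fin 3) (Fin 3) ℝ)) = 0) with hbad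
  have hbadcard : bad.card ≤ 3 := by
    by_contra hb
    push_neg at hb
    obtain ⟨T, hTsub, hTcard⟩ := Finset.exists_subset_card_eq (show 4 ≤ bad.card from hb)
    set τ : Fin 4 → ℝ := fun i => ((T.orderIsoOfFin hTcard) i : ℝ) with hτ
    have hτinj : Function.Injective τ := by
      intro i j hij
      exact (T.orderIsoOfFin hTcard).injective (Subtype.ext hij)
    set c : Fin 4 → ℝ := ![det B,
      -(B 0 0 * B 1 1 - B 0 1 * B 1 0 + B 0 0 * B 2 2 - B 0 2 * B 2 0
         + B 1 1 * B 2 2 - B 1 2 * B 2 1), B 0 0 + B 1 1 + B 2 2, -1] with hc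
    have hzero : ∀ i, ∑ j, c j * τ i ^ (j:ℕ) = 0 := by
      intro i
      have hmemT : τ i ∈ bad := hTsub ((T.orderIsoOfFin hTcard) i).2
      have hmemT' : τ i ∈ cand.filter
          (fun s => det (B - s • (1:Matrix (Fin 3) (Fin 3) ℝ)) = 0) := hmemT
      have hdet0 : det (B - (τ i) • (1:Matrix (Fin 3) (Fin 3) ℝ)) = 0 :=
        (Finset.mem_filter.mp hmemT').2
      rw [det_sub_expand] at hdet0
      rw [Fin.sum_univ_four, hc]
      have e2 : ((2:Fin 4):ℕ) = 2 := rfl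
      have e3 : ((3:Fin 4):ℕ) = 3 := rfl
      rw [e2, e3]
      norm_num
      simp only [Matrix.cons_val_two, Matrix.cons_val_three, Matrix.tail_cons, Matrix.head_cons]
      linear_combination hdet0
    have h3 := vdm τ c hτinj hzero 3
    rw [hc] at h3
    simp at h3
  set good := cand.filter (fun s => det (B - s • (1:Matrix (Fin 3) (Fin 3) ℝ)) ≠ 0) with hgood
  have hgoodcard : 6 ≤ good.card := by
    have hsplit := Finset.card_filter_add_card_filter_not
      (s := cand) (p := fun s => det (B - s • (1:Matrix (Fin 3) (Fin 3) ℝ)) = 0)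
    rw [hcandcard] at hsplit
    have h2 : (cand.filter (fun s => ¬ (det (B - s • (1:Matrix (Fin 3) (Fin 3) ℝ)) = 0))).card
        = good.card := rfl
    have h1 : (cand.filter (fun s => det (B - s • (1:Matrix (Fin 3) (Fin 3) ℝ)) = 0)).card
        = bad.card := rfl
    omega
  -- boundary data via choice
  obtain ⟨Q, hQdef⟩ : ∃ Q : ℝ → ℝ × ℝ → Prop, Q = fun s pq =>
      pq.1^2 + pq.2^2 = 1 ∧
      (B 0 0 * pq.1 + B 0 1 * pq.2 + B 0 2) * pq.2
        - (B 1 0 * pq.1 + B 1 1 * pq.2 + B 1 2) * pq.1 = 0 ∧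
      2*s = (pq.1*(B 0 0*pq.1 + B 0 1*pq.2 + B 0 2) + pq.2*(B 1 0*pq.1+B 1 1*pq.2+B 1 2))
        + (B 2 0*pq.1+B 2 1*pq.2+B 2 2) := ⟨_, rfl⟩
  obtain ⟨F, hFdef⟩ : ∃ F : ℝ → ℝ × ℝ, F = fun s =>
      if h : ∃ pq : ℝ × ℝ, Q s pq then h.choose else 0 := ⟨_, rfl⟩
  have hF : ∀ s ∈ good, Q s (F s) := by
    intro s hs
    have hs' : s ∈ cand.filter
        (fun s => det (B - s • (1:Matrix (Fin 3) (Fin 3) ℝ)) ≠ 0) := hs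
    obtain ⟨hsc, hsd⟩ := Finset.mem_filter.mp hs'
    have hsig' := hcandmem s hsc
    rcases classify B s hsig' with h | ⟨p, q, h1, h2, h3, _⟩
    · exact absurd h hsd
    · have hex : ∃ pq : ℝ × ℝ, Q s pq := ⟨(p, q), by rw [hQdef]; exact ⟨h1, h2, h3⟩⟩
      rw [hFdef]
      simp only [dif_pos hex]
      exact hex.choose_spec
  have hFinj : ∀ s1 ∈ good, ∀ s2 ∈ good, F s1 = F s2 → s1 = s2 := by
    intro s1 h1 s2 h2 heq
    have q1 := hF s1 h1
    have q2 := hF s2 h2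
    rw [hQdef] at q1 q2
    have := q1.2.2
    rw [heq] at this
    rw [← q2.2.2] at this
    linear_combination this / 2
  set good' := good.filter (fun s => (F s).1 ≠ -1) with hgood'
  have hbad1 : (good.filter (fun s => ¬ ((F s).1 ≠ -1))).card ≤ 1 := by
    apply Finset.card_le_one.mpr
    intro s1 hs1 s2 hs2
    obtain ⟨hg1, hp1⟩ := Finset.mem_filter.mp hs1
    obtain ⟨hg2, hp2⟩ := Finset.mem_filter.mp hs2
    push_neg at hp1 hp2
    have q1 := hF s1 hg1
    have q2 := hF s2 hg2
    rw [hQdef] at q1 q2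
    have hq1 : (F s1).2 = 0 := by
      have h := q1.1
      rw [hp1] at h
      have h' : (F s1).2^2 = 0 := by linear_combination h
      exact sq_eq_zero_iff.mp h'
    have hq2 : (F s2).2 = 0 := by
      have h := q2.1
      rw [hp2] at h
      have h' : (F s2).2^2 = 0 := by linear_combination h
      exact sq_eq_zero_iff.mp h'
    apply hFinj s1 hg1 s2 hg2
    have : F s1 = (-1, 0) := Prod.ext hp1 hq1
    have h2' : F s2 = (-1, 0) := Prod.ext hp2 hq2
    rw [this, h2']
  have hg'card : 5 ≤ good'.card := by
    have hsplit := Finset.card_filter_add_card_filter_not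
      (s := good) (p := fun s => (F s).1 ≠ -1)
    have e1 : (good.filter (fun s => (F s).1 ≠ -1)).card = good'.card := rfl
    omega
  obtain ⟨T', hT'sub, hT'card⟩ := Finset.exists_subset_card_eq hg'card
  set τ : Fin 5 → ℝ := fun i => ((T'.orderIsoOfFin hT'card) i : ℝ) with hτ
  have hτmem : ∀ i, τ i ∈ good' := fun i => hT'sub ((T'.orderIsoOfFin hT'card) i).2
  have hτmemg : ∀ i, τ i ∈ good := by
    intro i
    have h' : τ i ∈ good.filter (fun s => (F s).1 ≠ -1) := hτmem i
    exact (Finset.mem_filter.mp h').1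
  have hτp : ∀ i, (F (τ i)).1 ≠ -1 := by
    intro i
    have h' : τ i ∈ good.filter (fun s => (F s).1 ≠ -1) := hτmem i
    exact (Finset.mem_filter.mp h').2
  have hτinj : Function.Injective τ := by
    intro i j hij
    exact (T'.orderIsoOfFin hT'card).injective (Subtype.ext hij)
  obtain ⟨tt, httdef⟩ : ∃ tt : Fin 5 → ℝ, tt = fun i =>
      (F (τ i)).2 / (1 + (F (τ i)).1) := ⟨_, rfl⟩
  have hparam : ∀ i, (F (τ i)).1 * (1 + (tt i)^2) = 1 - (tt i)^2 ∧
      (F (τ i)).2 * (1 + (tt i)^2) = 2 * tt i := by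
    intro i
    have q1 := hF (τ i) (hτmemg i)
    rw [hQdef] at q1
    exact circle_param _ _ _ q1.1 (hτp i) (by rw [httdef])
  have httinj : Function.Injective tt := by
    intro i j hij
    have hi := hparam i
    have hj := hparam j
    rw [hij] at hi
    have htpos : (0:ℝ) < 1 + (tt j)^2 := by positivity
    have hpp : (F (τ i)).1 = (F (τ j)).1 :=
      mul_right_cancel₀ (ne_of_gt htpos) (hi.1.trans hj.1.symm)
    have hqq : (F (τ i)).2 = (F (τ j)).2 :=
      mul_right_cancel₀ (ne_of_gt htpos) (hi.2.trans hj.2.symm)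
    exact hτinj (hFinj _ (hτmemg i) _ (hτmemg j) (Prod.ext hpp hqq))
  set cq : Fin 5 → ℝ := ![-(B 1 0) - B 1 2,
      2*(B 0 0 - B 1 1) + 2*(B 0 2),
      4*(B 0 1) + 2*(B 1 0),
      -2*(B 0 0 - B 1 1) + 2*(B 0 2),
      -(B 1 0) + B 1 2] with hcq
  have hzero5 : ∀ i, ∑ j, cq j * tt i ^ (j:ℕ) = 0 := by
    intro i
    have q1 := hF (τ i) (hτmemg i)
    rw [hQdef] at q1
    obtain ⟨hu, hcr, -⟩ := q1
    obtain ⟨hp2, hq2⟩ := hparam i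
    have htne : (1 + (tt i)^2) ≠ 0 := by positivity
    have hpe : (F (τ i)).1 = (1 - (tt i)^2) / (1 + (tt i)^2) := by
      rw [eq_div_iff htne]; exact hp2
    have hqe : (F (τ i)).2 = (2 * tt i) / (1 + (tt i)^2) := by
      rw [eq_div_iff htne]; exact hq2
    have key : ∑ j, cq j * tt i ^ (j:ℕ) = (1 + (tt i)^2)^2 *
        ((B 0 0 * (F (τ i)).1 + B 0 1 * (F (τ i)).2 + B 0 2) * (F (τ i)).2
          - (B 1 0 * (F (τ i)).1 + B 1 1 * (F (τ i)).2 + B 1 2) * (F (τ i)).1) := by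
      rw [Fin.sum_univ_five, hcq, hpe, hqe]
      have e2 : ((2:Fin 5):ℕ) = 2 := rfl
      have e3 : ((3:Fin 5):ℕ) = 3 := rfl
      have e4 : ((4:Fin 5):ℕ) = 4 := rfl
      rw [e2, e3, e4]
      norm_num
      simp only [Matrix.cons_val_two, Matrix.cons_val_three, Matrix.cons_val_four, Matrix.tail_cons,
        Matrix.head_cons]
      field_simp
      ring
    rw [key, hcr, mul_zero]
  have hall := vdm tt cq httinj hzero5
  have z0 := hall 0
  have z1 := hall 1
  have z2 := hall 2
  have z3 := hall 3
  have z4 := hall 4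
  rw [hcq] at z0 z1 z2 z3 z4
  simp only [Matrix.cons_val_zero, Matrix.cons_val_one, Matrix.head_cons,
    Matrix.cons_val_two, Matrix.tail_cons, Matrix.cons_val_three,
    Matrix.cons_val_four] at z0 z1 z2 z3 z4
  refine ⟨by linarith, by linarith, by linarith, by linarith, by linarith⟩
set_option maxHeartbeats 800000 in
lemma step2 (B : Matrix (Fin 3) (Fin 3) ℝ) (v : Fin 2 → ℝ) (a : ℝ)
    (hav : a^2 < (v 0)^2 + (v 1)^2)
    (h01 : B 0 1 = 0) (h10 : B 1 0 = 0) (h02 : B 0 2 = 0) (h12 : B 1 2 = 0)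
    (h0011 : B 0 0 = B 1 1)
    (hsig : sigmaL B = sigmaL (blk 0 0 v a)) : B 0 0 ≤ 0 := by
  by_contra hcon
  push_neg at hcon
  have hr2 : 0 < (v 0)^2 + (v 1)^2 := lt_of_le_of_lt (sq_nonneg a) hav
  obtain ⟨r, hrdef⟩ : ∃ r : ℝ, r = Real.sqrt ((v 0)^2 + (v 1)^2) := ⟨_, rfl⟩
  have hr0 : 0 ≤ r := hrdef ▸ Real.sqrt_nonneg _
  have hrsq : r^2 = (v 0)^2 + (v 1)^2 := by rw [hrdef]; exact Real.sq_sqrt hr2.le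
  have har : |a| < r := by
    rw [hrdef, ← Real.sqrt_sq_eq_abs]
    exact Real.sqrt_lt_sqrt (sq_nonneg a) hav
  have hEa : -a < r := by rcases abs_lt.mp har with ⟨hh1, hh2⟩; linarith
  have hEa' : a < r := (abs_lt.mp har).2
  obtain ⟨E, hEdef⟩ : ∃ E : ℝ, E = (a + r)/2 := ⟨_, rfl⟩
  have hE : 0 < E := by rw [hEdef]; linarith
  have hminpos : 0 < min (B 0 0) E := lt_min hcon hE
  -- choose m among min/2, min/4 avoiding B 2 2
  obtain ⟨m, hm0, hmlt, hmE, hm22⟩ : ∃ m : ℝ, 0 < m ∧ m < B 0 0 ∧ m < E ∧ m ≠ B 2 2 := by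
    rcases eq_or_ne (min (B 0 0) E / 2) (B 2 2) with h | h
    · refine ⟨min (B 0 0) E / 4, by linarith, ?_, ?_, ?_⟩
      · have := min_le_left (B 0 0) E; linarith
      · have := min_le_right (B 0 0) E; linarith
      · rw [← h]; intro hx; linarith
    · refine ⟨min (B 0 0) E / 2, by linarith, ?_, ?_, h⟩
      · have := min_le_left (B 0 0) E; linarith
      · have := min_le_right (B 0 0) E; linarith
  have hmem : m ∈ sigmaL B := by
    rw [hsig]
    apply memA v a m hm0.le hr2
    have hle : 2*m - a ≤ r := by rw [hEdef] at hmE; linarith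
    have hge : -r ≤ 2*m - a := by linarith
    calc (2*m - a)^2 ≤ r^2 := sq_le_sq' hge hle
    _ = _ := hrsq
  have hdetB : det B = B 0 0 * B 1 1 * B 2 2 := by
    rw [Matrix.det_fin_three, h01, h10, h02, h12]
    ring
  have hdet : det (B - m • (1:Matrix (Fin 3) (Fin 3) ℝ)) = (B 0 0 - m)^2 * (B 2 2 - m) := by
    rw [det_sub_expand, hdetB, h01, h10, h02, h12, ← h0011]
    ring
  have hdetne : det (B - m • (1:Matrix (Fin 3) (Fin 3) ℝ)) ≠ 0 := by
    rw [hdet]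
    exact mul_ne_zero (pow_ne_zero _ (sub_ne_zero.mpr (ne_of_gt hmlt)))
      (sub_ne_zero.mpr (Ne.symm hm22))
  rcases classify B m hmem with h | ⟨p, q, hu, hcr, h2l, hκ⟩
  · exact hdetne h
  · rw [h01, h10, h02, h12] at hκ
    have : p * (B 0 0 * p + 0 * q + 0) + q * (0 * p + B 1 1 * q + 0) = B 0 0 := by
      rw [← h0011]; linear_combination B 0 0 * hu
    rw [this] at hκ
    linarith

lemma blk_neg (v : Fin 2 → ℝ) (a : ℝ) : -(blk 0 0 v a) = blk 0 0 (-v) (-a) := by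
  funext i j
  fin_cases i <;> fin_cases j <;> simp [blk_apply_00, blk_apply_01, blk_apply_02,
    blk_apply_10, blk_apply_11, blk_apply_12, blk_apply_20, blk_apply_21, blk_apply_22]

lemma blk_add (v w : Fin 2 → ℝ) (a b : ℝ) :
    blk 0 0 v a + blk 0 0 w b = blk 0 0 (v + w) (a + b) := by
  funext i j
  fin_cases i <;> fin_cases j <;> simp [blk_apply_00, blk_apply_01, blk_apply_02,
    blk_apply_10, blk_apply_11, blk_apply_12, blk_apply_20, blk_apply_21, blk_apply_22]

lemma key (B : Matrix (Fin 3) (Fin 3) ℝ) (v : Fin 2 → ℝ) (a : ℝ)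
    (hav : a^2 < (v 0)^2 + (v 1)^2)
    (h1 : sigmaL B = sigmaL (blk 0 0 v a))
    (h2 : sigmaL (-B) = sigmaL (blk 0 0 (-v) (-a))) :
    ∃ w b, B = blk 0 0 w b := by
  obtain ⟨h02, h12, h01, h10, h0011⟩ := step1 B v a hav h1
  have hav' : (-a)^2 < ((-v) 0)^2 + ((-v) 1)^2 := by
    simpa using hav
  have hB : B 0 0 ≤ 0 := step2 B v a hav h01 h10 h02 h12 h0011 h1
  have hnB : (-B) 0 0 ≤ 0 := by
    apply step2 (-B) (-v) (-a) hav' _ _ _ _ _ h2 <;>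
      simp [Matrix.neg_apply, h01, h10, h02, h12, h0011]
  have h00 : B 0 0 = 0 := le_antisymm hB (by
    have : -(B 0 0) ≤ 0 := by simpa [Matrix.neg_apply] using hnB
    linarith)
  refine ⟨![B 2 0, B 2 1], B 2 2, ?_⟩
  funext i j
  fin_cases i <;> fin_cases j <;>
    simp [blk_apply_00, blk_apply_01, blk_apply_02, blk_apply_10, blk_apply_11,
      blk_apply_12, blk_apply_20, blk_apply_21, blk_apply_22,
      h01, h10, h02, h12, h00, ← h0011]
theorem S1_invariant
    (φ : Matrix (Fin 3) (Fin 3) ℝ →ₗ[ℝ] Matrix (Fin 3) (Fin 3) ℝ)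
    (hφ : ∀ A, sigmaL (φ A) = sigmaL A) :
    ∀ A ∈ {B : Matrix (Fin 3) (Fin 3) ℝ | ∃ (v : Fin 2 → ℝ) (a : ℝ), B = blk 0 0 v a},
      φ A ∈ {B : Matrix (Fin 3) (Fin 3) ℝ | ∃ (v : Fin 2 → ℝ) (a : ℝ), B = blk 0 0 v a} := by
  rintro A ⟨v, a, rfl⟩
  obtain ⟨M, hMdef⟩ : ∃ M : ℝ, M = |v 0|/2 + |a|/2 + 1 := ⟨_, rfl⟩
  obtain ⟨v1, hv1⟩ : ∃ v1 : Fin 2 → ℝ, v1 = ![v 0/2 + M, v 1/2] := ⟨_, rfl⟩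
  obtain ⟨v2, hv2⟩ : ∃ v2 : Fin 2 → ℝ, v2 = ![v 0/2 - M, v 1/2] := ⟨_, rfl⟩
  have hgood : ∀ w : Fin 2 → ℝ, (a/2)^2 < (w 0)^2 + (w 1)^2 →
      ∃ w' b', φ (blk 0 0 w (a/2)) = blk 0 0 w' b' := by
    intro w hw
    apply key (φ (blk 0 0 w (a/2))) w (a/2) hw (hφ _)
    have hneg : -(φ (blk 0 0 w (a/2))) = φ (-(blk 0 0 w (a/2))) := (map_neg φ _).symm
    rw [hneg, blk_neg]
    exact hφ _
  have h1 : (a/2)^2 < (v1 0)^2 + (v1 1)^2 := by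
    have e0 : v1 0 = v 0/2 + M := by rw [hv1]; rfl
    have e1 : v1 1 = v 1/2 := by rw [hv1]; rfl
    rw [e0, e1, hMdef]
    nlinarith [neg_abs_le (v 0), le_abs_self a, neg_abs_le a, abs_nonneg (v 0),
      abs_nonneg a, sq_nonneg (v 1/2), sq_nonneg (|a|/2 + 1)]
  have h2 : (a/2)^2 < (v2 0)^2 + (v2 1)^2 := by
    have e0 : v2 0 = v 0/2 - M := by rw [hv2]; rfl
    have e1 : v2 1 = v 1/2 := by rw [hv2]; rfl
    rw [e0, e1, hMdef]
    nlinarith [le_abs_self (v 0), le_abs_self a, neg_abs_le a, abs_nonneg (v 0),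
      abs_nonneg a, sq_nonneg (v 1/2), sq_nonneg (|a|/2 + 1)]
  obtain ⟨w1, b1, hw1⟩ := hgood v1 h1
  obtain ⟨w2, b2, hw2⟩ := hgood v2 h2
  have hv12 : v1 + v2 = v := by
    funext i
    fin_cases i
    · have e0 : v1 0 = v 0/2 + M := by rw [hv1]; rfl
      have e0' : v2 0 = v 0/2 - M := by rw [hv2]; rfl
      show v1 0 + v2 0 = v 0
      rw [e0, e0']; ring
    · have e1 : v1 1 = v 1/2 := by rw [hv1]; rfl
      have e1' : v2 1 = v 1/2 := by rw [hv2]; rfl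
      show v1 1 + v2 1 = v 1
      rw [e1, e1']; ring
  have hdecomp : blk 0 0 v a = blk 0 0 v1 (a/2) + blk 0 0 v2 (a/2) := by
    rw [blk_add, add_halves, hv12]
  refine ⟨w1 + w2, b1 + b2, ?_⟩
  rw [hdecomp, map_add, hw1, hw2, blk_add]
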